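/- (Corollary 9, multi-tier interference-limited limit.) Fix α > 2, an integer T ≥ 1, a tier index t ∈ {1, …, T}, a density λ_t > 0, and for each q ∈ {1, …, T}: P_q > 0, B_q > 0, κ_q > 0, an integer F_q ≥ 1, and χ_q > 0; set SNR_q = χ_q·SNR for a common parameter SNR > 0. Let X_t and g_1, …, g_T be nonnegative random variables with X_t integrable and E[g_q^{2/α}] < ∞ for all q. Set M_{t,0}(z) = E[exp(-z·X_t)], M_{q,I}(z) = E[exp(-z·g_q)], and T_{q,I}(z) = z^{2/α}·E[g_q^{2/α}·γ(1 − 2/α, z·g_q)]. With v_q = (P_q·B_q/(P_t·B_t))^{-1}·(χ_q/χ_t), define Z̄(z) = Σ_{q=1}^T (κ_q·F_t/(F_q·κ_t))·(P_q·B_q/(P_t·B_t))^{2/α}·[(F_q − 1) + M_{q,I}(v_q·z) + T_{q,I}(v_q·z)] > 0, and for each SNR > 0 define the tier-t average rate R̃_t(SNR) = ∫₀^∞ (1 − M_{t,0}(SNR_t·y))·(G̃(y)/y) dy, where SNR_t = χ_t·SNR and G̃(y) = Z̃(y)^{-1} − (α/2)·(y/Z̃(y))·∫₀^∞ ξ^{α/2−1}·exp(-π·(κ_t·λ_t/F_t)·Z̃(y)·ξ)·exp(-y·ξ^{α/2})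 dξ with Z̃(y) = Z̄(SNR_t·y). If ∫₀^∞ (1 − M_{t,0}(z))·Z̄(z)^{-(1 + α/2)} dz < ∞, then lim_{SNR→∞} R̃_t(SNR) = R̃_t^{(SNR∞)} := ∫₀^∞ (1 − M_{t,0}(z))/(z·Z̄(z)) dz, and this limit coincides with the λ → ∞ limit of the rate (it is independent of λ_t and of SNR). -/

import Mathlib

/-!
Substituting `z = χ_t SNR y`, the finite-SNR integrand `(1 - M_{t,0}) G̃ / y` differs from the
interference-limited integrand `(1 - M_{t,0}(z)) / (z Z̄(z))` only by the noise correction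
`(α/2) (1 - M_{t,0}) J / Z̄`, where `J` is the `ξ`-integral in `G̃`. This correction is
nonnegative, and since `J` is at most the Gamma integral `(π κ_t λ_t Z̄ / F_t)^{-α/2} Γ(α/2)`, it
is bounded by a constant times `(1 - M_{t,0}) Z̄^{-(1 + α/2)}`. After rescaling, its integral is
`O(1 / SNR)` by the finiteness hypothesis, so the rate is squeezed onto its limit.
-/

open MeasureTheory Real Set Filter
open scoped ENNReal

/-- The lower incomplete gamma function `γ(a, x) = ∫₀^x s^{a-1} e^{-s} ds`. -/
noncomputable def lowerGamma (a x : ℝ) : ℝ :=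
  ∫ s in Set.Ioc (0 : ℝ) x, s ^ (a - 1) * Real.exp (-s)

open Topology

lemma lintegral_Ioi_ofReal_mul_comp_mul_left (f : ℝ → ℝ≥0∞) {c : ℝ} (hc : 0 < c) :
    ∫⁻ y in Ioi 0, ENNReal.ofReal c * f (c * y) = ∫⁻ z in Ioi 0, f z := by
  have h := lintegral_image_eq_lintegral_abs_deriv_mul (measurableSet_Ioi (a := (0 : ℝ)))
    (fun y _ => ((hasDerivAt_id' y).const_mul c).hasDerivWithinAt)
    (mul_right_injective₀ hc.ne').injOn f
  rw [image_mul_left_Ioi hc, mul_zero, mul_one, abs_of_pos hc] at h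
  exact h.symm

lemma lintegral_Ioi_comp_mul_left (f : ℝ → ℝ≥0∞) {c : ℝ} (hc : 0 < c) :
    ∫⁻ y in Ioi 0, f (c * y) = (ENNReal.ofReal c)⁻¹ * ∫⁻ z in Ioi 0, f z := by
  rw [← lintegral_Ioi_ofReal_mul_comp_mul_left f hc,
    lintegral_const_mul' _ _ ENNReal.ofReal_ne_top, ← mul_assoc,
    ENNReal.inv_mul_cancel (by simpa using hc) ENNReal.ofReal_ne_top, one_mul]

theorem tendsto_lintegral_Ioi_of_rescaled_sandwich {ι : Type*} {l : Filter ι} {c : ι → ℝ}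
    (hc : Tendsto c l atTop) {r : ι → ℝ → ℝ≥0∞} {f e : ℝ → ℝ≥0∞} (he : Measurable e)
    (he_fin : ∫⁻ z in Ioi 0, e z ≠ ∞)
    (hupper : ∀ᶠ i in l, ∀ y > 0, r i y ≤ ENNReal.ofReal (c i) * f (c i * y))
    (hlower : ∀ᶠ i in l, ∀ y > 0, ENNReal.ofReal (c i) * f (c i * y) ≤ r i y + e (c i * y)) :
    Tendsto (fun i => ∫⁻ y in Ioi 0, r i y) l (𝓝 (∫⁻ z in Ioi 0, f z)) := by
  have hε : Tendsto (fun i => (ENNReal.ofReal (c i))⁻¹ * ∫⁻ z in Ioi 0, e z) l (𝓝 0) := by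
    simpa using ENNReal.Tendsto.mul_const
      (tendsto_inv_iff.2 (ENNReal.tendsto_ofReal_atTop.comp hc)) (Or.inr he_fin)
  have hpos : ∀ᶠ i in l, 0 < c i := hc.eventually_gt_atTop 0
  refine tendsto_of_tendsto_of_tendsto_of_le_of_le'
    (by simpa using ENNReal.Tendsto.sub tendsto_const_nhds hε (Or.inr ENNReal.zero_ne_top))
    tendsto_const_nhds ?_ ?_
  · filter_upwards [hpos, hlower] with i hci hi
    rw [tsub_le_iff_right, ← lintegral_Ioi_ofReal_mul_comp_mul_left f hci,
      ← lintegral_Ioi_comp_mul_left e hci,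
      ← lintegral_add_right _ (by fun_prop : Measurable fun y => e (c i * y))]
    exact setLIntegral_mono' measurableSet_Ioi hi
  · filter_upwards [hpos, hupper] with i hci hi
    rw [← lintegral_Ioi_ofReal_mul_comp_mul_left f hci]
    exact setLIntegral_mono' measurableSet_Ioi hi

theorem tendsto_lintegral_Ioi_ofReal_of_rescaled_sandwich {ι : Type*} {l : Filter ι}
    {c : ι → ℝ} (hc : Tendsto c l atTop) {r : ι → ℝ → ℝ} {f e : ℝ → ℝ} (he : Measurable e)
    (he_fin : ∫⁻ z in Ioi 0, ENNReal.ofReal (e z) ≠ ∞)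
    (hupper : ∀ᶠ i in l, ∀ y > 0, r i y ≤ c i * f (c i * y))
    (hlower : ∀ᶠ i in l, ∀ y > 0, c i * f (c i * y) ≤ r i y + e (c i * y)) :
    Tendsto (fun i => ∫⁻ y in Ioi 0, ENNReal.ofReal (r i y)) l
      (𝓝 (∫⁻ z in Ioi 0, ENNReal.ofReal (f z))) := by
  have hpos : ∀ᶠ i in l, 0 < c i := hc.eventually_gt_atTop 0
  refine tendsto_lintegral_Ioi_of_rescaled_sandwich hc (by fun_prop) he_fin ?_ ?_
  · filter_upwards [hpos, hupper] with i hci hi y hy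
    rw [← ENNReal.ofReal_mul hci.le]
    exact ENNReal.ofReal_le_ofReal (hi y hy)
  · filter_upwards [hpos, hlower] with i hci hi y hy
    rw [← ENNReal.ofReal_mul hci.le]
    exact (ENNReal.ofReal_le_ofReal (hi y hy)).trans ENNReal.ofReal_add_le

@[fun_prop]
lemma measurable_lowerGamma (a : ℝ) : Measurable (lowerGamma a) := by
  have hjoint : Measurable fun p : ℝ × ℝ =>
      (Ioc 0 p.1).indicator (fun s => s ^ (a - 1) * Real.exp (-s)) p.2 := by
    have hset : MeasurableSet {p : ℝ × ℝ | p.2 ∈ Ioc 0 p.1} :=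
      (measurableSet_lt measurable_const measurable_snd).inter
        (measurableSet_le measurable_snd measurable_fst)
    exact Measurable.ite hset (by fun_prop) measurable_const
  unfold lowerGamma
  simpa only [integral_indicator measurableSet_Ioc] using
    (hjoint.stronglyMeasurable.integral_prod_right' (ν := volume)).measurable

lemma measurable_integral_comp {Ω : Type*} [MeasurableSpace Ω] (μ : Measure Ω) [SFinite μ]
    {φ : ℝ → ℝ → ℝ} (hφ : Measurable fun p : ℝ × ℝ => φ p.1 p.2) {X : Ω → ℝ}
    (hX : Measurable X) :
    Measurable fun z => ∫ ω, φ z (X ω) ∂μ :=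
  (hφ.comp (measurable_fst.prodMk (hX.comp measurable_snd))).stronglyMeasurable
    |>.integral_prod_right'.measurable

lemma measurable_integral_exp_neg_mul {Ω : Type*} [MeasurableSpace Ω] (μ : Measure Ω)
    [SFinite μ] {X : Ω → ℝ} (hX : Measurable X) :
    Measurable fun z => ∫ ω, Real.exp (-(z * X ω)) ∂μ :=
  measurable_integral_comp μ (φ := fun z x => Real.exp (-(z * x))) (by fun_prop) hX

lemma integral_exp_neg_mul_le_one {Ω : Type*} [MeasurableSpace Ω] (μ : Measure Ω)
    [IsProbabilityMeasure μ] {X : Ω → ℝ} (hX : ∀ ω, 0 ≤ X ω) {z : ℝ} (hz : 0 ≤ z) :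
    ∫ ω, Real.exp (-(z * X ω)) ∂μ ≤ 1 := by
  have hle (ω : Ω) : Real.exp (-(z * X ω)) ≤ 1 :=
    Real.exp_le_one_iff.2 (neg_nonpos.2 (mul_nonneg hz (hX ω)))
  simpa using integral_mono_of_nonneg (ae_of_all _ fun ω => (Real.exp_pos _).le)
    (integrable_const (1 : ℝ) (μ := μ)) (ae_of_all _ hle)

lemma setIntegral_rpow_mul_exp_neg_mul_mul_exp_le_Gamma {s b y p : ℝ} (hs : 0 < s)
    (hb : 0 < b) (hy : 0 ≤ y) :
    ∫ ξ in Ioi 0, ξ ^ (s - 1) * Real.exp (-(b * ξ)) * Real.exp (-(y * ξ ^ p))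
      ≤ (1 / b) ^ s * Gamma s := by
  have hint : IntegrableOn (fun ξ : ℝ => ξ ^ (s - 1) * Real.exp (-(b * ξ))) (Ioi 0) := by
    simpa [Real.rpow_one, neg_mul] using
      integrableOn_rpow_mul_exp_neg_mul_rpow (p := 1) (s := s - 1) (by linarith) one_pos hb
  rw [← integral_rpow_mul_exp_neg_mul_Ioi hs hb]
  refine integral_mono_of_nonneg (ae_restrict_of_forall_mem measurableSet_Ioi fun ξ hξ => ?_)
    hint (ae_restrict_of_forall_mem measurableSet_Ioi fun ξ hξ => ?_)
  · have : 0 < ξ := hξ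
    positivity
  · have : 0 < ξ := hξ
    exact mul_le_of_le_one_right (by positivity)
      (Real.exp_le_one_iff.2 (neg_nonpos.2 (by positivity)))

lemma rate_integrand_bounds {s a c y Z u J : ℝ} (hs : 0 < s) (ha : 0 < a) (hc : 0 < c)
    (hy : 0 < y) (hZ : 0 < Z) (hu : 0 ≤ u) (hJ0 : 0 ≤ J)
    (hJ : J ≤ (1 / (a * Z)) ^ s * Gamma s) :
    u * ((Z⁻¹ - s * (y / Z) * J) / y) ≤ c * (u / (c * y * Z)) ∧
      c * (u / (c * y * Z)) ≤ u * ((Z⁻¹ - s * (y / Z) * J) / y)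
        + s * ((1 / a) ^ s * Gamma s) * (u * Z ^ (-(1 + s))) := by
  have hsplit : c * (u / (c * y * Z)) = u * ((Z⁻¹ - s * (y / Z) * J) / y) + s * u * J / Z := by
    field_simp; ring
  have herr : s * u * J / Z ≤ s * ((1 / a) ^ s * Gamma s) * (u * Z ^ (-(1 + s))) :=
    calc s * u * J / Z ≤ s * u * ((1 / (a * Z)) ^ s * Gamma s) / Z := by gcongr
      _ = s * u * Gamma s * ((1 / (a * Z)) ^ s / Z) := by ring
      _ = s * ((1 / a) ^ s * Gamma s) * (u * Z ^ (-(1 + s))) := by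
        rw [neg_add, rpow_add hZ, rpow_neg_one, rpow_neg hZ.le, one_div, one_div, mul_inv,
          mul_rpow (inv_nonneg.2 ha.le) (inv_nonneg.2 hZ.le), inv_rpow hZ.le]
        ring
  rw [hsplit]
  exact ⟨le_add_of_nonneg_right (by positivity), add_le_add_right herr _⟩

theorem multi_tier_average_rate_interference_limited_limit_general
    {Ω : Type*} [MeasurableSpace Ω] (μ : Measure Ω) [IsProbabilityMeasure μ]
    (α : ℝ) (hα : 2 < α) (T : ℕ) (t : Fin T) (lamt : ℝ) (hlamt : 0 < lamt)
    (P B κ χ : Fin T → ℝ) (F : Fin T → ℕ)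
    (hκ : ∀ q, 0 < κ q)
    (hF : ∀ q, 1 ≤ F q) (hχ : ∀ q, 0 < χ q)
    (Xt : Ω → ℝ) (g : Fin T → Ω → ℝ)
    (hXt : Measurable Xt) (hg : ∀ q, Measurable (g q))
    (hXtnn : ∀ ω, 0 ≤ Xt ω)
    (Mt0 : ℝ → ℝ) (MI TI : Fin T → ℝ → ℝ)
    (hMt0 : ∀ z, Mt0 z = ∫ ω, Real.exp (-(z * Xt ω)) ∂μ)
    (hMI : ∀ q z, MI q z = ∫ ω, Real.exp (-(z * g q ω)) ∂μ)
    (hTI : ∀ q z, TI q z =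
        z ^ (2 / α) * ∫ ω, g q ω ^ (2 / α) * lowerGamma (1 - 2 / α) (z * g q ω) ∂μ)
    (Zbar : ℝ → ℝ)
    (hZbar : ∀ z, Zbar z = ∑ q : Fin T,
        (κ q * (F t : ℝ) / ((F q : ℝ) * κ t)) *
          (P q * B q / (P t * B t)) ^ (2 / α) *
          (((F q : ℝ) - 1) + MI q ((P q * B q / (P t * B t))⁻¹ * (χ q / χ t) * z)
            + TI q ((P q * B q / (P t * B t))⁻¹ * (χ q / χ t) * z)))
    (hZbarpos : ∀ z, 0 < Zbar z)
    (Gt : ℝ → ℝ → ℝ)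
    (hGt : ∀ y SNR, Gt y SNR = (Zbar (χ t * SNR * y))⁻¹ -
        (α / 2) * (y / Zbar (χ t * SNR * y)) *
        ∫ ξ in Set.Ioi (0 : ℝ),
          ξ ^ (α / 2 - 1) *
            Real.exp (-(π * (κ t * lamt / (F t : ℝ)) * Zbar (χ t * SNR * y) * ξ)) *
            Real.exp (-(y * ξ ^ (α / 2))))
    (R : ℝ → ℝ≥0∞)
    (hR : ∀ SNR, R SNR = ∫⁻ y in Set.Ioi (0 : ℝ),
        ENNReal.ofReal ((1 - Mt0 (χ t * SNR * y)) * (Gt y SNR / y)))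
    (hfin : (∫⁻ z in Set.Ioi (0 : ℝ),
        ENNReal.ofReal ((1 - Mt0 z) * Zbar z ^ (-(1 + α / 2)))) < ⊤) :
    Tendsto R atTop
      (nhds (∫⁻ z in Set.Ioi (0 : ℝ), ENNReal.ofReal ((1 - Mt0 z) / (z * Zbar z)))) := by
  have hs : 0 < α / 2 := by linarith
  have ha : 0 < π * (κ t * lamt / F t) := by
    have := hκ t; have : (0 : ℝ) < F t := by exact_mod_cast hF t
    positivity
  set K := α / 2 * ((1 / (π * (κ t * lamt / F t))) ^ (α / 2) * Gamma (α / 2))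
  have hMt0_meas : Measurable Mt0 := funext hMt0 ▸ measurable_integral_exp_neg_mul μ hXt
  have hZbar_meas : Measurable Zbar := by
    have hMI_meas (q) : Measurable (MI q) :=
      funext (hMI q) ▸ measurable_integral_exp_neg_mul μ (hg q)
    have hTI_meas (q) : Measurable (TI q) := funext (hTI q) ▸ (measurable_id.pow_const _).mul
      (measurable_integral_comp μ
        (φ := fun z x => x ^ (2 / α) * lowerGamma (1 - 2 / α) (z * x)) (by fun_prop) (hg q))
    rw [funext hZbar]; fun_prop
  have hbounds (SNR y : ℝ) (hSNR : 0 < SNR) (hy : 0 < y) :=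
    rate_integrand_bounds (c := χ t * SNR) (Z := Zbar (χ t * SNR * y))
      (u := 1 - Mt0 (χ t * SNR * y)) hs ha (mul_pos (hχ t) hSNR) hy (hZbarpos _)
      (sub_nonneg.2 <| (hMt0 _).trans_le <| integral_exp_neg_mul_le_one μ hXtnn <| by
        have := hχ t; positivity)
      (setIntegral_nonneg measurableSet_Ioi fun ξ (hξ : 0 < ξ) => by positivity)
      (setIntegral_rpow_mul_exp_neg_mul_mul_exp_le_Gamma (p := α / 2) hs
        (mul_pos ha (hZbarpos _)) hy.le)
  rw [show R = _ from funext hR]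
  refine tendsto_lintegral_Ioi_ofReal_of_rescaled_sandwich (tendsto_id.const_mul_atTop (hχ t))
    (e := fun z => K * ((1 - Mt0 z) * Zbar z ^ (-(1 + α / 2)))) (by fun_prop) ?_ ?_ ?_
  · simp_rw [ENNReal.ofReal_mul (by positivity : 0 ≤ K)]
    rw [lintegral_const_mul' _ _ ENNReal.ofReal_ne_top]
    exact ENNReal.mul_ne_top ENNReal.ofReal_ne_top hfin.ne
  all_goals filter_upwards [eventually_gt_atTop 0] with SNR hSNR y hy
  · simpa only [id, hGt] using (hbounds SNR y hSNR hy).1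
  · simpa only [id, hGt] using (hbounds SNR y hSNR hy).2

/-- Corollary 9: in a `T`-tier network with common path-loss exponent `α`, tier-`q` powers
`P q`, biases `B q`, density coefficients `κ q`, frequency bands `F q` with random
frequency reuse and per-tier SNRs `SNR_q = χ_q · SNR`, the tier-`t` average rate
`R̃_t(SNR)` converges, in the interference-limited regime `SNR → ∞`, to
`R̃_t^{(SNR∞)} = ∫₀^∞ (1 - M_{t,0}(z))/(z Z̄(z)) dz`, a quantity independent of the
density `λ_t` and of `SNR`. -/
theorem multi_tier_average_rate_interference_limited_limit
    {Ω : Type*} [MeasurableSpace Ω] (μ : Measure Ω) [IsProbabilityMeasure μ]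
    (α : ℝ) (hα : 2 < α) (T : ℕ) (hT : 1 ≤ T) (t : Fin T) (lamt : ℝ) (hlamt : 0 < lamt)
    (P B κ χ : Fin T → ℝ) (F : Fin T → ℕ)
    (hP : ∀ q, 0 < P q) (hB : ∀ q, 0 < B q) (hκ : ∀ q, 0 < κ q)
    (hF : ∀ q, 1 ≤ F q) (hχ : ∀ q, 0 < χ q)
    (Xt : Ω → ℝ) (g : Fin T → Ω → ℝ)
    (hXt : Measurable Xt) (hg : ∀ q, Measurable (g q))
    (hXtnn : ∀ ω, 0 ≤ Xt ω) (hgnn : ∀ q ω, 0 ≤ g q ω)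
    (hXtint : Integrable Xt μ) (hgint : ∀ q, Integrable (fun ω => g q ω ^ (2 / α)) μ)
    (Mt0 : ℝ → ℝ) (MI TI : Fin T → ℝ → ℝ)
    (hMt0 : ∀ z, Mt0 z = ∫ ω, Real.exp (-(z * Xt ω)) ∂μ)
    (hMI : ∀ q z, MI q z = ∫ ω, Real.exp (-(z * g q ω)) ∂μ)
    (hTI : ∀ q z, TI q z =
        z ^ (2 / α) * ∫ ω, g q ω ^ (2 / α) * lowerGamma (1 - 2 / α) (z * g q ω) ∂μ)
    (Zbar : ℝ → ℝ)
    (hZbar : ∀ z, Zbar z = ∑ q : Fin T,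
        (κ q * (F t : ℝ) / ((F q : ℝ) * κ t)) *
          (P q * B q / (P t * B t)) ^ (2 / α) *
          (((F q : ℝ) - 1) + MI q ((P q * B q / (P t * B t))⁻¹ * (χ q / χ t) * z)
            + TI q ((P q * B q / (P t * B t))⁻¹ * (χ q / χ t) * z)))
    (hZbarpos : ∀ z, 0 < Zbar z)
    (Gt : ℝ → ℝ → ℝ)
    (hGt : ∀ y SNR, Gt y SNR = (Zbar (χ t * SNR * y))⁻¹ -
        (α / 2) * (y / Zbar (χ t * SNR * y)) *
        ∫ ξ in Set.Ioi (0 : ℝ),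
          ξ ^ (α / 2 - 1) *
            Real.exp (-(π * (κ t * lamt / (F t : ℝ)) * Zbar (χ t * SNR * y) * ξ)) *
            Real.exp (-(y * ξ ^ (α / 2))))
    (R : ℝ → ℝ≥0∞)
    (hR : ∀ SNR, R SNR = ∫⁻ y in Set.Ioi (0 : ℝ),
        ENNReal.ofReal ((1 - Mt0 (χ t * SNR * y)) * (Gt y SNR / y)))
    (hfin : (∫⁻ z in Set.Ioi (0 : ℝ),
        ENNReal.ofReal ((1 - Mt0 z) * Zbar z ^ (-(1 + α / 2)))) < ⊤) :
    Tendsto R atTop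
      (nhds (∫⁻ z in Set.Ioi (0 : ℝ), ENNReal.ofReal ((1 - Mt0 z) / (z * Zbar z)))) :=
  multi_tier_average_rate_interference_limited_limit_general μ α hα T t lamt hlamt P B κ χ F hκ hF
    hχ Xt g hXt hg hXtnn Mt0 MI TI hMt0 hMI hTI Zbar hZbar hZbarpos Gt hGt R hR hfin
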